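/- arXiv:1907.12466 — 8 statements merged into one kernel-verified Lean document; each statement's English description precedes it below -/
import Mathlib

section
/- Every connected graph on n ≥ 1 vertices has an r-net of size at most ⌈n/(r+1)⌉, where an r-net is a set V₀ of vertices such that every vertex of the graph is within distance r of some vertex of V₀. -/
/-!
Fix a root `w` and split the vertices into the `r + 1` classes of `dist w v` modulo `r + 1`.
Walking back from `v` towards `w` along a shortest path reaches the class `i` within `r` steps,
unless `dist w v < i ≤ r`, in which case `w` itself is close enough. So each class together
with `w` is an `r`-net. Class `0` already contains `w`, hence these `r + 1` nets have total size
at most `n + r`, and the smallest one has size at most `⌈n / (r + 1)⌉`.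
-/

open Finset

namespace SimpleGraph

variable {V : Type*} {G : SimpleGraph V}

lemma Reachable.exists_dist_eq_sub {u v : V} (h : G.Reachable u v) {k : ℕ}
    (hk : k ≤ G.dist u v) : ∃ x, G.dist u x = G.dist u v - k ∧ G.dist x v ≤ k := by
  obtain ⟨p, hp⟩ := h.exists_walk_length_eq_dist
  set m := G.dist u v - k
  have hux : G.dist u (p.getVert m) ≤ m :=
    (dist_le (p.take m)).trans ((p.take_length m).trans_le (min_le_left _ _))
  have hxv : G.dist (p.getVert m) v ≤ k := by
    simpa [hp, m, Nat.sub_sub_self hk] using dist_le (p.drop m)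
  have := (p.drop m).reachable.dist_triangle_right u
  exact ⟨p.getVert m, by omega, hxv⟩

variable [Fintype V] [DecidableEq V]

noncomputable def distResidueNet (G : SimpleGraph V) (w : V) (m i : ℕ) : Finset V :=
  insert w ({v | G.dist w v % m = i} : Finset V)

lemma Connected.exists_mem_distResidueNet_dist_le (hG : G.Connected) (w : V) {r i : ℕ}
    (hi : i ≤ r) (v : V) : ∃ u ∈ G.distResidueNet w (r + 1) i, G.dist u v ≤ r := by
  set d := G.dist w v
  by_cases hv : i ≤ d
  · obtain ⟨x, hx, hxv⟩ := (hG w v).exists_dist_eq_sub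
      (Nat.mod_le (d - i) (r + 1) |>.trans (Nat.sub_le _ _))
    refine ⟨x, mem_insert_of_mem (mem_filter.mpr ⟨mem_univ _, ?_⟩),
      hxv.trans (Nat.le_of_lt_succ (Nat.mod_lt _ r.succ_pos))⟩
    have := Nat.div_add_mod (d - i) (r + 1)
    rw [hx, show d - (d - i) % (r + 1) = i + (r + 1) * ((d - i) / (r + 1)) by omega,
      Nat.add_mul_mod_self_left, Nat.mod_eq_of_lt (by omega)]
  · exact ⟨w, mem_insert_self _ _, by omega⟩

lemma sum_card_distResidueNet_le (w : V) (r : ℕ) :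
    ∑ i ∈ range (r + 1), #(G.distResidueNet w (r + 1) i) ≤ Fintype.card V + r := by
  have hfibers : ∑ i ∈ range (r + 1), #{v | G.dist w v % (r + 1) = i} = Fintype.card V :=
    (card_eq_sum_card_fiberwise fun v _ ↦ mem_range.mpr (Nat.mod_lt _ r.succ_pos)).symm
  have hzero : G.distResidueNet w (r + 1) 0 = ({v | G.dist w v % (r + 1) = 0} : Finset V) :=
    insert_eq_of_mem <| mem_filter.mpr ⟨mem_univ w, by simp⟩
  rw [sum_range_succ'] at hfibers
  calc ∑ i ∈ range (r + 1), #(G.distResidueNet w (r + 1) i)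
      _ = ∑ i ∈ range r, #(G.distResidueNet w (r + 1) (i + 1)) +
          #{v | G.dist w v % (r + 1) = 0} := by
        rw [sum_range_succ', hzero]
      _ ≤ ∑ i ∈ range r, (#{v | G.dist w v % (r + 1) = i + 1} + 1) +
          #{v | G.dist w v % (r + 1) = 0} := by
        gcongr; exact card_insert_le _ _
      _ = Fintype.card V + r := by rw [sum_add_distrib, sum_const, card_range, ← hfibers]; ring

theorem Connected.exists_net_card_le (hG : G.Connected) (r : ℕ) :
    ∃ V₀ : Finset V, (∀ v, ∃ u ∈ V₀, G.dist u v ≤ r) ∧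
      (r + 1) * #V₀ ≤ Fintype.card V + r := by
  obtain ⟨w⟩ := hG.nonempty
  have hsum : ∑ i ∈ range (r + 1), (r + 1) * #(G.distResidueNet w (r + 1) i) ≤
      ∑ _i ∈ range (r + 1), (Fintype.card V + r) := by
    rw [← mul_sum, sum_const, card_range, smul_eq_mul]
    exact Nat.mul_le_mul_left _ (sum_card_distResidueNet_le w r)
  obtain ⟨i, hi, hcard⟩ := exists_le_of_sum_le nonempty_range_add_one hsum
  exact ⟨_, hG.exists_mem_distResidueNet_dist_le w (Nat.lt_succ_iff.mp (mem_range.mp hi)),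
    hcard⟩

end SimpleGraph

lemma le_natCeil_div_of_mul_le {c n m : ℕ} (h : (m + 1) * c ≤ n + m) :
    c ≤ ⌈(n : ℝ) / (m + 1)⌉₊ := by
  obtain _ | c := c
  · exact Nat.zero_le _
  rw [Nat.add_one_le_ceil_iff, lt_div_iff₀ (by positivity)]
  have : c * (m + 1) < n := by nlinarith
  exact_mod_cast this

theorem stmt1_general (n r : ℕ) (G : SimpleGraph (Fin n))
    (hG : G.Connected) :
    ∃ V₀ : Finset (Fin n), (∀ v : Fin n, ∃ u ∈ V₀, G.dist u v ≤ r) ∧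
      V₀.card ≤ ⌈(n : ℝ) / (r + 1)⌉₊ := by
  obtain ⟨V₀, hcover, hcard⟩ := hG.exists_net_card_le r
  exact ⟨V₀, hcover, le_natCeil_div_of_mul_le (by simpa using hcard)⟩

/-- Every connected graph on `n ≥ 1` vertices has an `r`-net of size at most `⌈n/(r+1)⌉`:
a set `V₀` of vertices such that every vertex is within distance `r` of some vertex of `V₀`. -/
theorem stmt1 (n r : ℕ) (hn : 1 ≤ n) (hr : 1 ≤ r) (G : SimpleGraph (Fin n))
    (hG : G.Connected) :
    ∃ V₀ : Finset (Fin n), (∀ v : Fin n, ∃ u ∈ V₀, G.dist u v ≤ r) ∧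
      V₀.card ≤ ⌈(n : ℝ) / (r + 1)⌉₊ :=
  stmt1_general n r G hG
end

section
/- For every finite graph G and positive integer r, the sum over all eigenvalues λ_i of G of λ_i^{2r} is at most the sum over vertices v of λ₁(G_r(v))^{2r}, where G_r(v) is the subgraph induced by vertices at distance at most r from v. -/
/-!
Write `A` for the adjacency matrix of `G`. Then `∑ λᵢ^{2r} = tr A^{2r} = ∑_v (A^{2r})_{vv}`, and
`(A^{2r})_{vv}` counts closed walks of length `2r` at `v`. Such a walk stays within distance `r`
of `v`, so it is a closed walk of `G_r(v)`, and the count is at most `(B^{2r})_{vv}` for the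
adjacency matrix `B` of `G_r(v)`. Expanding in an orthonormal eigenbasis of `B`,
`(B^{2r})_{vv} = ∑ᵢ uᵢ(v)² μᵢ^{2r} ≤ max |μᵢ|^{2r}`, and `max |μᵢ| = λ₁(G_r(v))` because `B` is
entrywise nonnegative: the Rayleigh quotient of `|x|` dominates that of any eigenvector `x`.
-/

open Matrix SimpleGraph Finset
open scoped Classical RealInnerProductSpace

noncomputable section

/-- The adjacency matrix of a graph is Hermitian (real symmetric). -/
lemma adjHerm {V : Type} [Fintype V] [DecidableEq V] (G : SimpleGraph V) :
    (G.adjMatrix ℝ).IsHermitian := by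
  have h := G.isSymm_adjMatrix (α := ℝ)
  simpa [Matrix.IsHermitian, Matrix.conjTranspose_eq_transpose_of_trivial] using h

/-- The spectral radius (largest adjacency eigenvalue) `λ₁(G)` of a graph. -/
def specRad {V : Type} [Fintype V] [DecidableEq V] (G : SimpleGraph V) : ℝ :=
  ⨆ i, (adjHerm G).eigenvalues i

/-- The `j`-th largest adjacency eigenvalue of `G` (1-indexed, with multiplicity):
entry `card V - j` of the increasingly sorted list of eigenvalues. -/
def nthEig {V : Type} [Fintype V] [DecidableEq V] (G : SimpleGraph V) (j : ℕ) : ℝ :=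
  (Multiset.sort (Finset.univ.val.map (adjHerm G).eigenvalues) (· ≤ ·)).getD
    (Fintype.card V - j) 0

/-- The multiplicity of `μ` as an adjacency eigenvalue of `G`. -/
def eigMult {V : Type} [Fintype V] [DecidableEq V] (G : SimpleGraph V) (μ : ℝ) : ℕ :=
  Module.finrank ℝ (Module.End.eigenspace (Matrix.toLin' (G.adjMatrix ℝ)) μ)

/-- The ball of radius `r` around `v`: all vertices at graph distance at most `r` from `v`. -/
def ball {V : Type} (G : SimpleGraph V) (v : V) (r : ℕ) : Set V := {u | G.dist v u ≤ r}

lemma Matrix.abs_dotProduct_mulVec_le_of_nonneg {n : Type*} [Fintype n] {A : Matrix n n ℝ}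
    (hA : ∀ i j, 0 ≤ A i j) (x : n → ℝ) :
    |x ⬝ᵥ (A *ᵥ x)| ≤ |x| ⬝ᵥ (A *ᵥ |x|) := by
  simp only [dotProduct, mulVec, Pi.abs_apply]
  refine (Finset.abs_sum_le_sum_abs _ _).trans (Finset.sum_le_sum fun i _ => ?_)
  rw [abs_mul]
  refine mul_le_mul_of_nonneg_left ((Finset.abs_sum_le_sum_abs _ _).trans_eq ?_) (abs_nonneg _)
  exact Finset.sum_congr rfl fun j _ => by rw [abs_mul, abs_of_nonneg (hA i j)]

namespace Matrix.IsHermitian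

variable {n : Type*} [Fintype n] [DecidableEq n] {A : Matrix n n ℝ} (hA : A.IsHermitian)

lemma pow_eq_conj_diagonal (k : ℕ) :
    A ^ k = (hA.eigenvectorUnitary : Matrix n n ℝ) * diagonal (hA.eigenvalues ^ k) *
      star (hA.eigenvectorUnitary : Matrix n n ℝ) := by
  rw [← cfc_pow_id (R := ℝ) A k hA.isSelfAdjoint, hA.cfc_eq, IsHermitian.cfc,
    Unitary.conjStarAlgAut_apply]
  rfl

lemma trace_pow (k : ℕ) : (A ^ k).trace = ∑ i, hA.eigenvalues i ^ k := by
  rw [hA.pow_eq_conj_diagonal, trace_mul_cycle, Unitary.coe_star_mul_self, one_mul,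
    trace_diagonal]
  rfl

lemma pow_apply_self (k : ℕ) (v : n) :
    (A ^ k) v v =
      ∑ i, (hA.eigenvectorUnitary : Matrix n n ℝ) v i ^ 2 * hA.eigenvalues i ^ k := by
  rw [hA.pow_eq_conj_diagonal, mul_apply]
  refine Finset.sum_congr rfl fun i _ => ?_
  simp [sq, mul_comm, mul_left_comm]

lemma sum_eigenvectorUnitary_sq (v : n) :
    ∑ i, (hA.eigenvectorUnitary : Matrix n n ℝ) v i ^ 2 = 1 := by
  simpa [mul_apply, sq] using congrFun₂ (Unitary.coe_mul_star_self hA.eigenvectorUnitary) v v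

lemma dotProduct_mulVec_le_iSup_eigenvalues_mul (y : n → ℝ) :
    y ⬝ᵥ (A *ᵥ y) ≤ (⨆ i, hA.eigenvalues i) * (y ⬝ᵥ y) := by
  set U := (hA.eigenvectorUnitary : Matrix n n ℝ)
  set c := star U *ᵥ y
  have hUy : y ᵥ* U = c := by simp [c, ← mulVec_transpose, star_eq_conjTranspose]
  have hcc : c ⬝ᵥ c = y ⬝ᵥ y := by
    nth_rw 1 [← hUy]
    rw [← dotProduct_mulVec, mulVec_mulVec,
      Unitary.mul_star_self_of_mem hA.eigenvectorUnitary.2, one_mulVec]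
  have hquad : y ⬝ᵥ (A *ᵥ y) = ∑ i, hA.eigenvalues i * c i ^ 2 := by
    conv_lhs => rw [← pow_one A, hA.pow_eq_conj_diagonal, pow_one]
    rw [← mulVec_mulVec, ← mulVec_mulVec, dotProduct_mulVec, hUy]
    simp only [dotProduct, mulVec_diagonal, c]
    exact Finset.sum_congr rfl fun i _ => by ring
  have hbdd : BddAbove (Set.range hA.eigenvalues) := (Set.finite_range _).bddAbove
  rw [hquad, ← hcc, dotProduct, Finset.mul_sum]
  exact Finset.sum_le_sum fun i _ => by
    rw [← sq]; exact mul_le_mul_of_nonneg_right (le_ciSup hbdd i) (sq_nonneg _)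

lemma abs_eigenvalues_le_iSup (hnn : ∀ i j, 0 ≤ A i j) (j : n) :
    |hA.eigenvalues j| ≤ ⨆ i, hA.eigenvalues i := by
  set x : n → ℝ := ⇑(hA.eigenvectorBasis j)
  have hxx : x ⬝ᵥ x = 1 := by
    have h : inner ℝ (hA.eigenvectorBasis j) (hA.eigenvectorBasis j) = 1 := by
      rw [real_inner_self_eq_norm_sq, hA.eigenvectorBasis.orthonormal.1 j, one_pow]
    rwa [EuclideanSpace.inner_eq_star_dotProduct, star_trivial] at h
  have hx : hA.eigenvalues j = x ⬝ᵥ (A *ᵥ x) := by simpa using hA.eigenvalues_eq j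
  calc |hA.eigenvalues j| = |x ⬝ᵥ (A *ᵥ x)| := by rw [hx]
    _ ≤ |x| ⬝ᵥ (A *ᵥ |x|) := abs_dotProduct_mulVec_le_of_nonneg hnn x
    _ ≤ (⨆ i, hA.eigenvalues i) * (|x| ⬝ᵥ |x|) :=
      hA.dotProduct_mulVec_le_iSup_eigenvalues_mul |x|
    _ = ⨆ i, hA.eigenvalues i := by
      simp only [dotProduct, Pi.abs_apply, abs_mul_abs_self]
      rw [← dotProduct, hxx, mul_one]

lemma pow_two_mul_apply_self_le (hnn : ∀ i j, 0 ≤ A i j) (k : ℕ) (v : n) :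
    (A ^ (2 * k)) v v ≤ (⨆ i, hA.eigenvalues i) ^ (2 * k) := by
  set U := (hA.eigenvectorUnitary : Matrix n n ℝ)
  set ρ := ⨆ i, hA.eigenvalues i
  calc (A ^ (2 * k)) v v = ∑ i, U v i ^ 2 * hA.eigenvalues i ^ (2 * k) := hA.pow_apply_self _ v
    _ ≤ ∑ i, U v i ^ 2 * ρ ^ (2 * k) := by
      refine Finset.sum_le_sum fun i _ => mul_le_mul_of_nonneg_left ?_ (sq_nonneg _)
      rw [← (even_two_mul k).pow_abs]
      exact pow_le_pow_left₀ (abs_nonneg _) (hA.abs_eigenvalues_le_iSup hnn i) _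
    _ = ρ ^ (2 * k) := by rw [← Finset.sum_mul, hA.sum_eigenvectorUnitary_sq, one_mul]

end Matrix.IsHermitian

lemma mem_ball_self {V : Type} (G : SimpleGraph V) (v : V) (r : ℕ) :
    v ∈ _root_.ball G v r := by
  simp [_root_.ball]

namespace SimpleGraph

variable {V : Type} {G : SimpleGraph V}

lemma Walk.length_induce {s : Set V} {u w : V} (p : G.Walk u w)
    (hp : ∀ x ∈ p.support, x ∈ s) :
    (p.induce s hp).length = p.length := by
  induction p with
  | nil => rfl
  | cons _ _ ih => simp [ih]

lemma Walk.two_mul_dist_le_length {v x : V} (p : G.Walk v v) (hx : x ∈ p.support) :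
    2 * G.dist v x ≤ p.length := by
  have h₁ : G.dist v x ≤ (p.takeUntil x hx).length := dist_le _
  have h₂ : G.dist v x ≤ (p.dropUntil x hx).length := dist_comm ▸ dist_le _
  have h := congrArg Walk.length (p.take_spec hx)
  rw [Walk.length_append] at h
  omega

lemma Walk.support_subset_ball {v : V} {r : ℕ} (p : G.Walk v v) (hp : p.length = 2 * r) :
    ∀ x ∈ p.support, x ∈ _root_.ball G v r := fun x hx => by
  have := p.two_mul_dist_le_length hx
  simp only [_root_.ball, Set.mem_ofPred_eq]
  omega

lemma adjMatrix_nonneg [DecidableEq V] {α : Type*} [Semiring α] [PartialOrder α]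
    [IsOrderedRing α] (u w : V) : 0 ≤ G.adjMatrix α u w := by
  rw [adjMatrix_apply]
  split_ifs <;> simp

lemma adjMatrix_pow_apply_self_le_induce_ball [Fintype V] [DecidableEq V] {α : Type*}
    [Semiring α] [PartialOrder α] [IsOrderedRing α] (v : V) (r : ℕ) :
    (G.adjMatrix α ^ (2 * r)) v v ≤
      ((G.induce (_root_.ball G v r)).adjMatrix α ^ (2 * r)) ⟨v, _root_.mem_ball_self G v r⟩
        ⟨v, _root_.mem_ball_self G v r⟩ := by
  simp only [adjMatrix_pow_apply_eq_card_walk]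
  refine Nat.mono_cast (Fintype.card_le_of_injective
    (fun p => ⟨p.1.induce _ (p.1.support_subset_ball p.2), ?_⟩) fun p q hpq => ?_)
  · rw [Set.mem_ofPred_eq, Walk.length_induce]
    exact p.2
  · simpa [Subtype.ext_iff] using congrArg (fun q => q.1.map (Embedding.induce _).toHom) hpq

end SimpleGraph

theorem stmt3_general {V : Type} [Fintype V] [DecidableEq V] (G : SimpleGraph V) (r : ℕ) :
    ∑ i, (adjHerm G).eigenvalues i ^ (2 * r) ≤
      ∑ v, specRad (G.induce (_root_.ball G v r)) ^ (2 * r) := by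
  rw [← (adjHerm G).trace_pow]
  refine Finset.sum_le_sum fun v _ => ?_
  set H := G.induce (_root_.ball G v r)
  let v' : _root_.ball G v r := ⟨v, mem_ball_self G v r⟩
  calc (G.adjMatrix ℝ ^ (2 * r)) v v ≤ (H.adjMatrix ℝ ^ (2 * r)) v' v' :=
        adjMatrix_pow_apply_self_le_induce_ball v r
    _ ≤ specRad H ^ (2 * r) := (adjHerm H).pow_two_mul_apply_self_le adjMatrix_nonneg r v'

/-- For every graph `G` and positive integer `r`, the sum of the `2r`-th powers of the
eigenvalues of `G` is at most the sum over vertices `v` of `λ₁(G_r(v))^(2r)`, where `G_r(v)`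
is the subgraph induced by vertices at distance at most `r` from `v`. -/
theorem stmt3 {V : Type} [Fintype V] [DecidableEq V] (G : SimpleGraph V) (r : ℕ)
    (hr : 1 ≤ r) :
    ∑ i, (adjHerm G).eigenvalues i ^ (2 * r) ≤
      ∑ v, specRad (G.induce (_root_.ball G v r)) ^ (2 * r) :=
  stmt3_general G r

end
end

section
/- There exist N equiangular lines in R^d with common angle arccos α (0 < α < 1) if and only if there exists an N-vertex graph G such that the matrix λI − A_G + (1/2)J is positive semidefinite and has rank at most d, where λ = (1−α)/(2α), A_G is the adjacency matrix of G, and J is the all-ones matrix. -/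
open Matrix SimpleGraph Finset
open scoped Classical RealInnerProductSpace

noncomputable section

/-! Unit vectors with pairwise inner products `±α` are exactly the families whose Gram matrix is
`I + α S` for the Seidel matrix `S` of some graph, and `S = J - I - 2A` gives
`I + α S = 2α (λI - A + J/2)`. A real matrix is the Gram matrix of vectors in `ℝ^d` iff it is
positive semidefinite of rank at most `d`: writing it as `BᵀB`, the columns of `B` span a space
of dimension `rank B ≤ d`, which embeds isometrically into `ℝ^d`. -/

open Module in
theorem exists_linearIsometry_euclideanSpace_of_finrank_le {S : Type*} [NormedAddCommGroup S]
    [InnerProductSpace ℝ S] [FiniteDimensional ℝ S] {d : ℕ} (h : finrank ℝ S ≤ d) :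
    Nonempty (S →ₗᵢ[ℝ] EuclideanSpace ℝ (Fin d)) := by
  let b := stdOrthonormalBasis ℝ S
  let f : S →ₗ[ℝ] EuclideanSpace ℝ (Fin d) :=
    b.toBasis.constr ℝ fun i => EuclideanSpace.single (Fin.castLE h i) 1
  refine ⟨f.isometryOfOrthonormal (v := b.toBasis) (by simp) ?_⟩
  have hf : ⇑f ∘ ⇑b.toBasis = fun i => EuclideanSpace.single (Fin.castLE h i) (1 : ℝ) := by
    ext1 i
    simp [f]
  rw [hf]
  exact EuclideanSpace.orthonormal_single.comp _ (Fin.castLE_injective h)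

namespace Matrix

variable {n : Type*} {d : ℕ}

theorem posSemidef_smul_iff {c : ℝ} (hc : 0 < c) {M : Matrix n n ℝ} :
    (c • M).PosSemidef ↔ M.PosSemidef :=
  ⟨fun h => by simpa [smul_smul, hc.ne'] using h.smul (inv_nonneg.mpr hc.le),
    fun h => h.smul hc.le⟩

variable [Fintype n]

theorem rank_smul_of_ne_zero {m K : Type*} [Field K] {c : K} (hc : c ≠ 0) (M : Matrix m n K) :
    (c • M).rank = M.rank :=
  rank_smul_of_mem_nonZeroDivisors M (mem_nonZeroDivisors_of_ne_zero hc)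

theorem rank_gram_le (v : n → EuclideanSpace ℝ (Fin d)) : (gram ℝ v).rank ≤ d := by
  rw [gram_eq_conjTranspose_mul (EuclideanSpace.basisFun (Fin d) ℝ), rank_conjTranspose_mul_self]
  exact (rank_le_card_height _).trans_eq (Fintype.card_fin d)

open scoped MatrixOrder in
theorem PosSemidef.exists_gram_eq_of_rank_le {M : Matrix n n ℝ} (hM : M.PosSemidef)
    (hr : M.rank ≤ d) : ∃ v : n → EuclideanSpace ℝ (Fin d), gram ℝ v = M := by
  obtain ⟨B, rfl⟩ := CStarAlgebra.nonneg_iff_eq_star_mul_self.mp hM.nonneg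
  let u : n → EuclideanSpace ℝ n := fun j => WithLp.toLp 2 (B.col j)
  have hspan : Module.finrank ℝ (Submodule.span ℝ (Set.range u)) ≤ d := by
    let e := (WithLp.linearEquiv 2 ℝ (n → ℝ)).symm
    have hu : Set.range u = (e : (n → ℝ) →ₗ[ℝ] EuclideanSpace ℝ n) '' Set.range B.col := by
      rw [← Set.range_comp]
      rfl
    rwa [hu, Submodule.span_image, LinearEquiv.finrank_map_eq, ← rank_eq_finrank_span_cols,
      ← rank_conjTranspose_mul_self, ← star_eq_conjTranspose]
  obtain ⟨φ⟩ := exists_linearIsometry_euclideanSpace_of_finrank_le hspan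
  refine ⟨fun j => φ ⟨u j, Submodule.subset_span ⟨j, rfl⟩⟩, ?_⟩
  ext i j
  simp [gram_apply, LinearIsometry.inner_map_map, u, mul_apply, PiLp.inner_apply, mul_comm]

theorem exists_gram_eq_iff {M : Matrix n n ℝ} :
    (∃ v : n → EuclideanSpace ℝ (Fin d), gram ℝ v = M) ↔ M.PosSemidef ∧ M.rank ≤ d :=
  ⟨fun ⟨v, hv⟩ => hv ▸ ⟨posSemidef_gram ℝ v, rank_gram_le v⟩,
    fun ⟨hM, hr⟩ => hM.exists_gram_eq_of_rank_le hr⟩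

end Matrix

namespace SimpleGraph

variable {V : Type*} [DecidableEq V] (G : SimpleGraph V) [DecidableRel G.Adj]

def seidelMatrix : Matrix V V ℝ :=
  of fun i j => if i = j then 0 else if G.Adj i j then -1 else 1

theorem one_add_smul_seidelMatrix_apply (α : ℝ) (i j : V) :
    (1 + α • G.seidelMatrix) i j = if i = j then 1 else if G.Adj i j then -α else α := by
  rcases eq_or_ne i j with rfl | hij
  · simp [seidelMatrix]
  · by_cases hadj : G.Adj i j <;> simp [hij, hadj, seidelMatrix, one_apply_ne hij]

theorem seidelMatrix_eq : G.seidelMatrix = of (fun _ _ => 1) - 1 - (2 : ℝ) • G.adjMatrix ℝ := by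
  ext i j
  rcases eq_or_ne i j with rfl | hij
  · simp [seidelMatrix]
  · by_cases hadj : G.Adj i j <;> norm_num [seidelMatrix, hij, hadj]

theorem smul_one_sub_adjMatrix_add_smul_eq {α : ℝ} (hα : α ≠ 0) :
    ((1 - α) / (2 * α)) • (1 : Matrix V V ℝ) - G.adjMatrix ℝ + (1 / 2 : ℝ) • of (fun _ _ => 1) =
      (2 * α)⁻¹ • (1 + α • G.seidelMatrix) := by
  rw [seidelMatrix_eq]
  match_scalars <;> field_simp
  ring

end SimpleGraph

open SimpleGraph in
theorem exists_gram_eq_one_add_smul_seidelMatrix_iff {V E : Type*} [DecidableEq V]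
    [NormedAddCommGroup E] [InnerProductSpace ℝ E] (v : V → E) (α : ℝ) :
    ((∀ i, ‖v i‖ = 1) ∧ ∀ i j, i ≠ j → ⟪v i, v j⟫ = α ∨ ⟪v i, v j⟫ = -α) ↔
      ∃ G : SimpleGraph V, gram ℝ v = 1 + α • G.seidelMatrix := by
  constructor
  · rintro ⟨hunit, hangle⟩
    refine ⟨fromRel fun i j => ⟪v i, v j⟫ = -α, ?_⟩
    ext i j
    rw [gram_apply, one_add_smul_seidelMatrix_apply]
    by_cases hij : i = j
    · simp [hij, hunit]
    · simp only [hij, if_false, fromRel_adj, ne_eq, not_false_eq_true, true_and,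
        real_inner_comm (v i), or_self]
      split_ifs with h
      exacts [h, (hangle i j hij).resolve_right h]
  · rintro ⟨G, hG⟩
    have h i j := congrFun (congrFun hG i) j
    simp only [gram_apply, one_add_smul_seidelMatrix_apply] at h
    refine ⟨fun i => ?_, fun i j hij => ?_⟩
    · simpa [real_inner_self_eq_norm_sq, pow_eq_one_iff_of_nonneg (norm_nonneg _) two_ne_zero]
        using h i i
    · rw [h i j, if_neg hij]
      split_ifs <;> simp

theorem stmt6_general (d N : ℕ) (α : ℝ) (hα : 0 < α) (l : ℝ)
    (hl : l = (1 - α) / (2 * α)) :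
    (∃ v : Fin N → EuclideanSpace ℝ (Fin d), (∀ i, ‖v i‖ = 1) ∧
        ∀ i j, i ≠ j → ⟪v i, v j⟫ = α ∨ ⟪v i, v j⟫ = -α) ↔
      (∃ G : SimpleGraph (Fin N),
        (l • (1 : Matrix (Fin N) (Fin N) ℝ) - G.adjMatrix ℝ
            + (1 / 2 : ℝ) • (Matrix.of fun _ _ => (1 : ℝ))).PosSemidef ∧
        (l • (1 : Matrix (Fin N) (Fin N) ℝ) - G.adjMatrix ℝ
            + (1 / 2 : ℝ) • (Matrix.of fun _ _ => (1 : ℝ))).rank ≤ d) := by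
  subst hl
  have hc : 0 < (2 * α)⁻¹ := by positivity
  simp_rw [smul_one_sub_adjMatrix_add_smul_eq _ hα.ne', posSemidef_smul_iff hc,
    rank_smul_of_ne_zero hc.ne', ← exists_gram_eq_iff,
    exists_gram_eq_one_add_smul_seidelMatrix_iff]
  exact exists_comm

/-- There exist `N` equiangular lines in `ℝ^d` with common angle `arccos α` iff there is an
`N`-vertex graph `G` with `λI - A_G + (1/2)J` positive semidefinite of rank at most `d`,
where `λ = (1-α)/(2α)` and `J` is the all-ones matrix. -/
theorem stmt6 (d N : ℕ) (α : ℝ) (hα : 0 < α) (hα1 : α < 1) (l : ℝ)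
    (hl : l = (1 - α) / (2 * α)) :
    (∃ v : Fin N → EuclideanSpace ℝ (Fin d), (∀ i, ‖v i‖ = 1) ∧
        ∀ i j, i ≠ j → ⟪v i, v j⟫ = α ∨ ⟪v i, v j⟫ = -α) ↔
      (∃ G : SimpleGraph (Fin N),
        (l • (1 : Matrix (Fin N) (Fin N) ℝ) - G.adjMatrix ℝ
            + (1 / 2 : ℝ) • (Matrix.of fun _ _ => (1 : ℝ))).PosSemidef ∧
        (l • (1 : Matrix (Fin N) (Fin N) ℝ) - G.adjMatrix ℝ
            + (1 / 2 : ℝ) • (Matrix.of fun _ _ => (1 : ℝ))).rank ≤ d) :=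
  stmt6_general d N α hα l hl

end
end

section
/- Let α ∈ (0,1), λ = (1−α)/(2α), and suppose there exists a graph H on k vertices with spectral radius exactly λ. Then for every d, N_α(d) ≥ ⌊k(d−1)/(k−1)⌋, i.e., there exist ⌊k(d−1)/(k−1)⌋ unit vectors in R^d with pairwise inner products ±α. -/
/-!
Let `G` consist of `q = ⌊(d-1)/(k-1)⌋` disjoint copies of `H` and `r = (d-1) mod (k-1)` isolated
vertices, so that `G` has `kq + r = ⌊k(d-1)/(k-1)⌋` vertices. As `λ = λ₁(H) ≥ 0` bounds the spectrum
of `A_G`, the matrix `M = λI - A_G + J/2` is positive semidefinite. A top eigenvector of `H` placed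
on each copy gives `q` independent vectors in the kernel of `λI - A_G`, so
`rank M ≤ (kq + r - q) + 1 = d`. Hence `M` is the Gram matrix of vectors in `ℝ^d`; rescaled by
`√(2α)` they have squared norm `2α(λ + 1/2) = 1` and pairwise inner products
`2α(1/2 - A_G(i,j)) = ±α`.
-/

open Matrix SimpleGraph Finset
open scoped Classical RealInnerProductSpace

noncomputable section

open scoped Kronecker ComplexOrder

namespace Matrix

section Rank

variable {m n κ K : Type*} [Fintype n] [Field K]

theorem rank_add_le (A B : Matrix m n K) : (A + B).rank ≤ A.rank + B.rank := by
  rw [rank, rank, rank, mulVecLin_add]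
  exact (Submodule.finrank_mono (LinearMap.range_add_le _ _)).trans
    (Submodule.finrank_add_le_finrank_add_finrank _ _)

theorem rank_add_card_le_card_of_mulVec_eq_zero [Fintype κ] (M : Matrix m n K) {v : κ → n → K}
    (hv : LinearIndependent K v) (hMv : ∀ i, M *ᵥ v i = 0) :
    M.rank + Fintype.card κ ≤ Fintype.card n := by
  have hker : Fintype.card κ ≤ Module.finrank K (LinearMap.ker M.mulVecLin) := by
    rw [← finrank_span_eq_card hv]
    exact Submodule.finrank_mono (Submodule.span_le.mpr (Set.range_subset_iff.mpr hMv))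
  have := M.mulVecLin.finrank_range_add_finrank_ker
  rw [Module.finrank_fintype_fun_eq_card] at this
  rw [rank]
  omega

end Rank

theorem PosSemidef.fromBlocks_zero {m n 𝕜 : Type*} [Fintype m] [Fintype n] [RCLike 𝕜]
    {A : Matrix m m 𝕜} {D : Matrix n n 𝕜} (hA : A.PosSemidef) (hD : D.PosSemidef) :
    (fromBlocks A 0 0 D).PosSemidef := by
  refine .of_dotProduct_mulVec_nonneg (hA.isHermitian.fromBlocks (by simp) hD.isHermitian)
    fun x => ?_
  rw [← Sum.elim_comp_inl_inr x, fromBlocks_mulVec]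
  simp only [zero_mulVec, add_zero, zero_add, dotProduct, Fintype.sum_sum_type, Sum.elim_inl,
    Sum.elim_inr, Pi.star_apply]
  exact add_nonneg (hA.dotProduct_mulVec_nonneg _) (hD.dotProduct_mulVec_nonneg _)

variable {n : Type*} [Fintype n] [DecidableEq n]

theorem IsHermitian.posSemidef_smul_one_sub {A : Matrix n n ℝ} (hA : A.IsHermitian) {l : ℝ}
    (hl : ∀ i, hA.eigenvalues i ≤ l) : (l • 1 - A).PosSemidef := by
  refine posSemidef_iff_isHermitian_and_spectrum_nonneg.mpr
    ⟨(isHermitian_one.smul (IsSelfAdjoint.all l)).sub hA, ?_⟩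
  rw [← Algebra.algebraMap_eq_smul_one, ← spectrum.singleton_sub_eq,
    hA.spectrum_real_eq_range_eigenvalues]
  rintro _ ⟨_, rfl, _, ⟨i, rfl⟩, rfl⟩
  exact sub_nonneg.mpr (hl i)

theorem IsHermitian.apply_eq_sum_eigenvalues {M : Matrix n n ℝ} (hM : M.IsHermitian) (i j : n) :
    M i j = ∑ t, hM.eigenvalues t * hM.eigenvectorUnitary i t * hM.eigenvectorUnitary j t := by
  conv_lhs => rw [hM.spectral_theorem]
  simp [mul_apply, diagonal_apply, mul_comm]

theorem PosSemidef.exists_gram_of_rank_le {M : Matrix n n ℝ} (hM : M.PosSemidef) {d : ℕ}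
    (hd : M.rank ≤ d) : ∃ w : n → EuclideanSpace ℝ (Fin d), gram ℝ w = M := by
  obtain ⟨f⟩ : Nonempty ({t // hM.1.eigenvalues t ≠ 0} ↪ Fin d) :=
    Function.Embedding.nonempty_of_card_le
      (by rwa [← hM.1.rank_eq_card_non_zero_eigs, Fintype.card_fin])
  have hf : Orthonormal ℝ fun t => EuclideanSpace.single (f t) (1 : ℝ) :=
    EuclideanSpace.orthonormal_single.comp f f.injective
  let c (i : n) (t : {t // hM.1.eigenvalues t ≠ 0}) : ℝ :=
    √(hM.1.eigenvalues t) * hM.1.eigenvectorUnitary i t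
  refine ⟨fun i => ∑ t, c i t • EuclideanSpace.single (f t) 1, ?_⟩
  ext i j
  rw [gram_apply, hf.inner_sum, hM.1.apply_eq_sum_eigenvalues,
    ← Finset.sum_filter_of_ne (p := fun t => hM.1.eigenvalues t ≠ 0)
      (fun t _ h hμ => h (by simp [hμ])), ← Finset.sum_subtype_eq_sum_filter, Finset.subtype_univ]
  refine Finset.sum_congr rfl fun t _ => ?_
  have := Real.mul_self_sqrt (hM.eigenvalues_nonneg t.1)
  simp only [c, conj_trivial]
  linear_combination hM.1.eigenvectorUnitary i t * hM.1.eigenvectorUnitary j t * this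

end Matrix

theorem Nat.add_one_mul_div_eq {j : ℕ} (hj : 0 < j) (m : ℕ) :
    (j + 1) * m / j = (j + 1) * (m / j) + m % j := by
  conv_lhs => rw [← Nat.div_add_mod m j]
  rw [show (j + 1) * (j * (m / j) + m % j) = m % j + j * ((j + 1) * (m / j) + m % j) by ring,
    Nat.add_mul_div_left _ _ hj, Nat.div_eq_of_lt (Nat.mod_lt _ hj), zero_add]

def disjointCopies {V : Type} (H : SimpleGraph V) (q r : ℕ) :
    SimpleGraph ((V × Fin q) ⊕ Fin r) :=
  (H □ ⊥) ⊕g ⊥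

theorem adjMatrix_disjointCopies {V : Type} (H : SimpleGraph V) (q r : ℕ) :
    (disjointCopies H q r).adjMatrix ℝ = fromBlocks (H.adjMatrix ℝ ⊗ₖ 1) 0 0 0 := by
  ext (⟨a, p⟩ | c) (⟨b, p'⟩ | c') <;> simp only [adjMatrix_apply] <;>
    simp [disjointCopies, boxProd_adj, one_apply, ite_and, and_comm]

theorem smul_one_sub_adjMatrix_disjointCopies {V : Type} [DecidableEq V] (H : SimpleGraph V)
    (q r : ℕ) (l : ℝ) :
    l • 1 - (disjointCopies H q r).adjMatrix ℝ =
      fromBlocks ((l • 1 - H.adjMatrix ℝ) ⊗ₖ (1 : Matrix (Fin q) (Fin q) ℝ)) 0 0 (l • 1) := by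
  rw [adjMatrix_disjointCopies]
  ext (⟨a, p⟩ | c) (⟨b, p'⟩ | c') <;> simp [one_apply, ite_and]
  split_ifs <;> simp

section

variable {V : Type} [Fintype V] [DecidableEq V]

theorem eigenvalues_le_specRad (H : SimpleGraph V) (i : V) :
    (adjHerm H).eigenvalues i ≤ specRad H :=
  le_ciSup (Set.finite_range _).bddAbove i

theorem exists_mulVec_eq_specRad_smul [Nonempty V] (H : SimpleGraph V) :
    ∃ φ : V → ℝ, φ ≠ 0 ∧ H.adjMatrix ℝ *ᵥ φ = specRad H • φ := by
  obtain ⟨i, hi⟩ : ∃ i, (adjHerm H).eigenvalues i = specRad H := exists_eq_ciSup_of_finite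
  refine ⟨(adjHerm H).eigenvectorBasis i, fun h => ?_,
    hi ▸ (adjHerm H).mulVec_eigenvectorBasis i⟩
  exact (adjHerm H).eigenvectorBasis.orthonormal.ne_zero i
    (by simpa using congrArg (WithLp.toLp 2) h)

def equiangularMatrix (G : SimpleGraph V) (l : ℝ) : Matrix V V ℝ :=
  l • 1 - G.adjMatrix ℝ + (1 / 2 : ℝ) • vecMulVec 1 1

theorem exists_unit_vectors_of_equiangularMatrix {G : SimpleGraph V} {α l : ℝ} {d : ℕ}
    (hα : 0 < α) (hl : 2 * α * l = 1 - α) (hM : (equiangularMatrix G l).PosSemidef)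
    (hrank : (equiangularMatrix G l).rank ≤ d) :
    ∃ w : V → EuclideanSpace ℝ (Fin d), (∀ i, ‖w i‖ = 1) ∧
      ∀ i j, i ≠ j → ⟪w i, w j⟫ = α ∨ ⟪w i, w j⟫ = -α := by
  obtain ⟨u, hu⟩ := hM.exists_gram_of_rank_le hrank
  have hinner (i j : V) :
      ⟪√(2 * α) • u i, √(2 * α) • u j⟫ = 2 * α * equiangularMatrix G l i j := by
    rw [real_inner_smul_left, real_inner_smul_right, ← mul_assoc,
      Real.mul_self_sqrt (by positivity), ← hu, gram_apply]
  refine ⟨fun i => √(2 * α) • u i, fun i => ?_, fun i j hij => ?_⟩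
  · have hsq : ‖√(2 * α) • u i‖ ^ 2 = 1 := by
      rw [← real_inner_self_eq_norm_sq, hinner]
      simp [equiangularMatrix]
      linarith
    exact (pow_eq_one_iff_of_nonneg (norm_nonneg _) two_ne_zero).mp hsq
  · rw [hinner]
    by_cases hadj : G.Adj i j <;> simp [equiangularMatrix, hij, hadj] <;> [right; left] <;> ring

variable {q r : ℕ} {H : SimpleGraph V} {l : ℝ}

theorem posSemidef_equiangularMatrix_disjointCopies (hH : ∀ i, (adjHerm H).eigenvalues i ≤ l)
    (hl : 0 ≤ l) : (equiangularMatrix (disjointCopies H q r) l).PosSemidef := by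
  rw [equiangularMatrix, smul_one_sub_adjMatrix_disjointCopies]
  exact .add (.fromBlocks_zero (((adjHerm H).posSemidef_smul_one_sub hH).kronecker .one)
    (PosSemidef.one.smul hl)) ((posSemidef_vecMulVec_self_star 1).smul (by norm_num))

theorem rank_equiangularMatrix_disjointCopies_add_le {φ : V → ℝ} (hφ0 : φ ≠ 0)
    (hφ : H.adjMatrix ℝ *ᵥ φ = l • φ) :
    (equiangularMatrix (disjointCopies H q r) l).rank + q ≤ Fintype.card V * q + r + 1 := by
  let ψ (p : Fin q) : (V × Fin q) ⊕ Fin r → ℝ :=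
    Sum.elim (fun x => if x.2 = p then φ x.1 else 0) 0
  obtain ⟨a, ha⟩ : ∃ a, φ a ≠ 0 := Function.ne_iff.mp hφ0
  have hψ : LinearIndependent ℝ ψ := by
    refine Fintype.linearIndependent_iff.mpr fun g hg p => ?_
    simpa [ψ, ha] using congrFun hg (.inl (a, p))
  have hkerψ (p : Fin q) : (l • 1 - (disjointCopies H q r).adjMatrix ℝ) *ᵥ ψ p = 0 := by
    have hK : (l • 1 - H.adjMatrix ℝ) *ᵥ φ = 0 := by
      rw [sub_mulVec, smul_mulVec, one_mulVec, hφ, sub_self]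
    rw [smul_one_sub_adjMatrix_disjointCopies]
    ext (⟨b, p'⟩ | c)
    · have hKb := congrFun hK b
      simp [ψ, mulVec, dotProduct, Fintype.sum_prod_type, one_apply] at hKb ⊢
      exact fun _ => hKb
    · simp [ψ, fromBlocks_mulVec]
  have hker := rank_add_card_le_card_of_mulVec_eq_zero _ hψ hkerψ
  simp only [Fintype.card_sum, Fintype.card_prod, Fintype.card_fin] at hker
  have hJ : ((1 / 2 : ℝ) • vecMulVec 1 1 :
      Matrix ((V × Fin q) ⊕ Fin r) ((V × Fin q) ⊕ Fin r) ℝ).rank ≤ 1 := by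
    rw [← smul_vecMulVec]
    exact rank_vecMulVec_le _ _
  have hsplit : (equiangularMatrix (disjointCopies H q r) l).rank ≤
      (l • 1 - (disjointCopies H q r).adjMatrix ℝ).rank + 1 :=
    (rank_add_le _ _).trans (add_le_add_right hJ _)
  omega

end

theorem stmt8_general (α : ℝ) (hα : 0 < α) (hα1 : α < 1) (l : ℝ) (hl : l = (1 - α) / (2 * α))
    (k : ℕ) (H : SimpleGraph (Fin k)) (hH : specRad H = l) (d : ℕ) :
    ∃ v : Fin (k * (d - 1) / (k - 1)) → EuclideanSpace ℝ (Fin d), (∀ i, ‖v i‖ = 1) ∧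
      ∀ i j, i ≠ j → ⟪v i, v j⟫ = α ∨ ⟪v i, v j⟫ = -α := by
  -- for `k ≤ 1` (where `/ 0` gives `0`) or `d ≤ 1` no vectors are asked for
  rcases Nat.eq_zero_or_pos (k * (d - 1) / (k - 1)) with hn | hn
  · exact ⟨fun i => (Fin.cast hn i).elim0, fun i => (Fin.cast hn i).elim0,
      fun i => (Fin.cast hn i).elim0⟩
  obtain ⟨j, rfl⟩ : ∃ j, k = j + 1 := ⟨k - 1, by grind⟩
  have hj : 0 < j := Nat.pos_of_ne_zero (by rintro rfl; simp at hn)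
  have hd : 1 ≤ d := Nat.one_le_iff_ne_zero.mpr (by rintro rfl; simp at hn)
  set q := (d - 1) / j
  set r := (d - 1) % j
  obtain ⟨φ, hφ0, hφ⟩ := exists_mulVec_eq_specRad_smul H
  have hrank : (equiangularMatrix (disjointCopies H q r) l).rank ≤ d := by
    have hrank := rank_equiangularMatrix_disjointCopies_add_le (q := q) (r := r) hφ0 (hH ▸ hφ)
    have hdiv : j * q + r = d - 1 := Nat.div_add_mod _ _
    rw [Fintype.card_fin, add_one_mul] at hrank
    omega
  have hl0 : 0 ≤ l := by rw [hl]; exact div_nonneg (by linarith) (by linarith)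
  have hpsd := posSemidef_equiangularMatrix_disjointCopies (q := q) (r := r)
    (hH ▸ eigenvalues_le_specRad H) hl0
  obtain ⟨w, hw1, hwα⟩ := exists_unit_vectors_of_equiangularMatrix hα
    (by rw [hl]; field_simp) hpsd hrank
  have e : Fin ((j + 1) * (d - 1) / (j + 1 - 1)) ≃ (Fin (j + 1) × Fin q) ⊕ Fin r :=
    Fintype.equivOfCardEq (by simp [Nat.add_one_mul_div_eq hj, q, r])
  exact ⟨w ∘ e, fun i => hw1 _, fun i i' hii' => hwα _ _ (e.injective.ne hii')⟩

/-- If there is a graph `H` on `k` vertices with spectral radius exactly `λ = (1-α)/(2α)`,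
then for every `d ≥ 1` there exist `⌊k(d-1)/(k-1)⌋` unit vectors in `ℝ^d` with pairwise
inner products `±α`. -/
theorem stmt8 (α : ℝ) (hα : 0 < α) (hα1 : α < 1) (l : ℝ) (hl : l = (1 - α) / (2 * α))
    (k : ℕ) (H : SimpleGraph (Fin k)) (hH : specRad H = l) (d : ℕ) (hd : 1 ≤ d) :
    ∃ v : Fin (k * (d - 1) / (k - 1)) → EuclideanSpace ℝ (Fin d), (∀ i, ‖v i‖ = 1) ∧
      ∀ i j, i ≠ j → ⟪v i, v j⟫ = α ∨ ⟪v i, v j⟫ = -α :=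
  stmt8_general α hα hα1 l hl k H hH d

end
end

section
/- Let G be a finite graph such that λI − A_G + (1/2)J is positive semidefinite, and suppose G has at least two connected components. If one component C₁ satisfies λ₁(C₁) > λ, then every other component C_i satisfies λ₁(C_i) < λ. -/
/-!
Extend a top eigenvector of each component by zero and take absolute values: this gives
nonnegative vectors `a` on `C₁` and `b` on `C₂` whose Rayleigh quotients for `A_G` are at least
`λ₁(C₁)` and `λ₁(C₂)`. Since the components are disjoint and not joined by edges, the form
`Q = λI - A_G` has no cross terms between `a` and `b`, so on `w = (∑ b) a - (∑ a) b`, which is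
orthogonal to the all-ones vector, positive semidefiniteness gives
`0 ≤ (∑ b)² Q(a) + (∑ a)² Q(b)`. As `λ < λ₁(C₁)` forces `Q(a) < 0`, we get `Q(b) > 0`,
i.e. `λ₁(C₂) < λ`.
-/

open Matrix SimpleGraph Finset
open scoped Classical RealInnerProductSpace

noncomputable section

namespace Matrix

variable {ι : Type*}

section ExtendByZero

variable {s : Set ι}

lemma extend_subtypeVal_apply_of_notMem {α : Type*} [Zero α] (x : s → α) {i : ι} (hi : i ∉ s) :
    Function.extend Subtype.val x 0 i = 0 :=
  Function.extend_apply' x _ i fun ⟨a, ha⟩ => hi (ha ▸ a.2)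

variable [Fintype ι]

lemma extend_subtypeVal_dotProduct (x : s → ℝ) (z : ι → ℝ) :
    Function.extend Subtype.val x 0 ⬝ᵥ z = x ⬝ᵥ (z ∘ Subtype.val) :=
  Finset.sum_congr_set s _ _
    (fun i hi => by rw [Subtype.val_injective.extend_apply x 0 ⟨i, hi⟩]; rfl)
    (fun i hi => by rw [extend_subtypeVal_apply_of_notMem x hi, zero_mul])

lemma extend_subtypeVal_dotProduct_self (x : s → ℝ) :
    Function.extend Subtype.val x 0 ⬝ᵥ Function.extend Subtype.val x 0 = x ⬝ᵥ x := by
  rw [extend_subtypeVal_dotProduct, Function.extend_comp Subtype.val_injective]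

lemma extend_subtypeVal_dotProduct_mulVec (M : Matrix ι ι ℝ) (x : s → ℝ) :
    Function.extend Subtype.val x 0 ⬝ᵥ M *ᵥ Function.extend Subtype.val x 0 =
      x ⬝ᵥ M.submatrix Subtype.val Subtype.val *ᵥ x := by
  rw [extend_subtypeVal_dotProduct]
  congr 1
  ext i
  simp only [Function.comp_apply, mulVec, dotProduct_comm (M _),
    extend_subtypeVal_dotProduct]
  exact dotProduct_comm _ _

end ExtendByZero

variable [Fintype ι]

lemma dotProduct_self_pos_of_pos {x : ι → ℝ} (hx : 0 < x) : 0 < x ⬝ᵥ x :=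
  lt_of_le_of_ne (dotProduct_nonneg_of_nonneg hx.le hx.le)
    (Ne.symm (dotProduct_self_eq_zero.not.mpr hx.ne'))

lemma dotProduct_mulVec_le_abs {M : Matrix ι ι ℝ} (hM : ∀ i j, 0 ≤ M i j) (x : ι → ℝ) :
    x ⬝ᵥ M *ᵥ x ≤ |x| ⬝ᵥ M *ᵥ |x| := by
  simp only [dotProduct, mulVec, Finset.mul_sum]
  refine Finset.sum_le_sum fun i _ => Finset.sum_le_sum fun j _ => ?_
  calc x i * (M i j * x j) = M i j * (x i * x j) := by ring
    _ ≤ M i j * (|x i| * |x j|) :=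
        mul_le_mul_of_nonneg_left (abs_mul (x i) (x j) ▸ le_abs_self _) (hM i j)
    _ = |x| i * (M i j * |x| j) := by simp only [Pi.abs_apply]; ring

lemma abs_dotProduct_abs (x : ι → ℝ) : |x| ⬝ᵥ |x| = x ⬝ᵥ x :=
  Finset.sum_congr rfl fun i _ => abs_mul_abs_self (x i)

lemma dotProduct_smul_one_sub_mulVec [DecidableEq ι] (M : Matrix ι ι ℝ) (l : ℝ) (x : ι → ℝ) :
    x ⬝ᵥ (l • 1 - M) *ᵥ x = l * (x ⬝ᵥ x) - x ⬝ᵥ M *ᵥ x := by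
  rw [sub_mulVec, smul_mulVec, one_mulVec, dotProduct_sub, dotProduct_smul, smul_eq_mul]

lemma dotProduct_mulVec_eq_zero_of_support {M : Matrix ι ι ℝ} {x y : ι → ℝ}
    (h : ∀ i j, x i ≠ 0 → y j ≠ 0 → M i j = 0) : x ⬝ᵥ M *ᵥ y = 0 := by
  simp only [dotProduct, mulVec, Finset.mul_sum]
  refine Finset.sum_eq_zero fun i _ => Finset.sum_eq_zero fun j _ => ?_
  by_cases hi : x i = 0
  · rw [hi, zero_mul]
  by_cases hj : y j = 0
  · rw [hj, mul_zero, mul_zero]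
  rw [h i j hi hj, zero_mul, mul_zero]

lemma dotProduct_mulVec_smul_sub_smul {R : Type*} [CommRing R] {M : Matrix ι ι R} {a b : ι → R}
    (hab : a ⬝ᵥ M *ᵥ b = 0) (hba : b ⬝ᵥ M *ᵥ a = 0) (s t : R) :
    (s • a - t • b) ⬝ᵥ M *ᵥ (s • a - t • b) = s ^ 2 * (a ⬝ᵥ M *ᵥ a) + t ^ 2 * (b ⬝ᵥ M *ᵥ b) := by
  simp only [mulVec_sub, mulVec_smul, sub_dotProduct, dotProduct_sub, smul_dotProduct,
    dotProduct_smul, hab, hba, smul_eq_mul]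
  ring

lemma PosSemidef.dotProduct_mulVec_nonneg_of_sum_eq_zero {M : Matrix ι ι ℝ} {c : ℝ}
    (hM : (M + c • of fun _ _ => 1).PosSemidef) {w : ι → ℝ} (hw : ∑ i, w i = 0) :
    0 ≤ w ⬝ᵥ M *ᵥ w := by
  have hJ : (of fun _ _ => 1 : Matrix ι ι ℝ) *ᵥ w = 0 :=
    funext fun _ => by simpa [mulVec, dotProduct]
  have h := hM.dotProduct_mulVec_nonneg w
  rwa [star_trivial, add_mulVec, smul_mulVec, hJ, smul_zero, add_zero] at h

/-- Test the form on `(∑ b) • a - (∑ a) • b`: its coordinates sum to zero, so the all-ones part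
drops out. -/
lemma PosSemidef.dotProduct_mulVec_pos_of_neg {M : Matrix ι ι ℝ} {c : ℝ}
    (hM : (M + c • of fun _ _ => 1).PosSemidef) {a b : ι → ℝ}
    (hab : a ⬝ᵥ M *ᵥ b = 0) (hba : b ⬝ᵥ M *ᵥ a = 0) (hb : ∑ i, b i ≠ 0)
    (ha : a ⬝ᵥ M *ᵥ a < 0) : 0 < b ⬝ᵥ M *ᵥ b := by
  have hsum : ∑ i, ((∑ j, b j) • a - (∑ j, a j) • b) i = 0 := by
    simp only [Pi.sub_apply, Pi.smul_apply, smul_eq_mul, Finset.sum_sub_distrib,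
      ← Finset.mul_sum]
    ring
  have hnonneg := hM.dotProduct_mulVec_nonneg_of_sum_eq_zero hsum
  rw [dotProduct_mulVec_smul_sub_smul hab hba] at hnonneg
  have : (∑ j, b j) ^ 2 * (a ⬝ᵥ M *ᵥ a) < 0 := mul_neg_of_pos_of_neg (by positivity) ha
  nlinarith [sq_nonneg (∑ j, a j)]

lemma IsHermitian.exists_ne_zero_dotProduct_mulVec_eq_iSup_eigenvalues [DecidableEq ι]
    [Nonempty ι] {M : Matrix ι ι ℝ} (hM : M.IsHermitian) :
    ∃ x : ι → ℝ, x ≠ 0 ∧ x ⬝ᵥ M *ᵥ x = (⨆ i, hM.eigenvalues i) * (x ⬝ᵥ x) := by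
  obtain ⟨i, hi⟩ := exists_eq_ciSup_of_finite (f := hM.eigenvalues)
  refine ⟨hM.eigenvectorBasis i, fun h => hM.eigenvectorBasis.orthonormal.ne_zero i ?_, ?_⟩
  · ext j
    exact congrFun h j
  · rw [← hi, hM.mulVec_eigenvectorBasis i, dotProduct_smul, smul_eq_mul]

/-- Perron–Frobenius in the weak form needed here: replacing a top eigenvector by its absolute
value does not decrease the Rayleigh quotient of a nonnegative matrix. -/
lemma IsHermitian.exists_pos_iSup_eigenvalues_mul_le [DecidableEq ι] [Nonempty ι]
    {M : Matrix ι ι ℝ} (hM : M.IsHermitian) (hM₀ : ∀ i j, 0 ≤ M i j) :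
    ∃ x : ι → ℝ, 0 < x ∧ (⨆ i, hM.eigenvalues i) * (x ⬝ᵥ x) ≤ x ⬝ᵥ M *ᵥ x := by
  obtain ⟨x, hx, hρ⟩ := hM.exists_ne_zero_dotProduct_mulVec_eq_iSup_eigenvalues
  have habs : |x| ≠ 0 := fun h => hx (funext fun i => abs_eq_zero.mp (congrFun h i))
  refine ⟨|x|, lt_of_le_of_ne (abs_nonneg x) habs.symm, ?_⟩
  rw [abs_dotProduct_abs, ← hρ]
  exact dotProduct_mulVec_le_abs hM₀ x

end Matrix

namespace SimpleGraph

variable {V : Type} (G : SimpleGraph V)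

lemma adjMatrix_induce (s : Set V) :
    (G.induce s).adjMatrix ℝ = (G.adjMatrix ℝ).submatrix Subtype.val Subtype.val := by
  ext v w
  simp [adjMatrix_apply]

variable [Fintype V] [DecidableEq V]

lemma exists_pos_specRad_induce_mul_le (c : G.ConnectedComponent) :
    ∃ x : V → ℝ, 0 < x ∧ (∀ v ∉ c.supp, x v = 0) ∧
      specRad (G.induce c.supp) * (x ⬝ᵥ x) ≤ x ⬝ᵥ G.adjMatrix ℝ *ᵥ x := by
  have : Nonempty c.supp := c.nonempty_supp.to_subtype
  obtain ⟨y, hy, hρ⟩ := (adjHerm (G.induce c.supp)).exists_pos_iSup_eigenvalues_mul_le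
    fun v w => by rw [adjMatrix_apply]; split_ifs <;> norm_num
  refine ⟨Function.extend Subtype.val y 0, ?_, fun v hv => extend_subtypeVal_apply_of_notMem y hv,
    ?_⟩
  · refine lt_of_le_of_ne (Function.extend_nonneg hy.le le_rfl) fun h => hy.ne' ?_
    rw [← Function.extend_comp Subtype.val_injective y 0, ← h]
    rfl
  · rw [extend_subtypeVal_dotProduct_self, extend_subtypeVal_dotProduct_mulVec,
      ← adjMatrix_induce]
    -- the two sides carry different `Fintype c.supp` instances (classical vs. `instDecidableMemSupp`)
    unfold specRad
    convert hρ

lemma dotProduct_smul_one_sub_adjMatrix_mulVec_eq_zero {c c' : G.ConnectedComponent}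
    (hne : c ≠ c') {x y : V → ℝ} (hx : ∀ v ∉ c.supp, x v = 0) (hy : ∀ v ∉ c'.supp, y v = 0)
    (l : ℝ) : x ⬝ᵥ (l • 1 - G.adjMatrix ℝ) *ᵥ y = 0 := by
  refine dotProduct_mulVec_eq_zero_of_support fun v w hv hw => ?_
  have hv : G.connectedComponentMk v = c := not_not.mp (mt (hx v) hv)
  have hw : G.connectedComponentMk w = c' := not_not.mp (mt (hy w) hw)
  have hvw : v ≠ w := by rintro rfl; exact hne (hv.symm.trans hw)
  have hadj : ¬G.Adj v w := fun h => hne (hv ▸ hw ▸ ConnectedComponent.sound h.reachable)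
  simp [adjMatrix_apply, hvw, hadj]

end SimpleGraph

/-- If `λI - A_G + (1/2)J` is positive semidefinite and one connected component `C₁`
satisfies `λ₁(C₁) > λ`, then every other component `C` satisfies `λ₁(C) < λ`. -/
theorem stmt10 {V : Type} [Fintype V] [DecidableEq V] (G : SimpleGraph V) (l : ℝ)
    (hpsd : (l • (1 : Matrix V V ℝ) - G.adjMatrix ℝ
        + (1 / 2 : ℝ) • (Matrix.of fun _ _ => (1 : ℝ))).PosSemidef)
    (c₁ c₂ : G.ConnectedComponent) (hne : c₁ ≠ c₂)
    (h1 : l < specRad (G.induce c₁.supp)) :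
    specRad (G.induce c₂.supp) < l := by
  obtain ⟨a, ha, ha₁, hρ₁⟩ := G.exists_pos_specRad_induce_mul_le c₁
  obtain ⟨b, hb, hb₂, hρ₂⟩ := G.exists_pos_specRad_induce_mul_le c₂
  have hQa : a ⬝ᵥ (l • 1 - G.adjMatrix ℝ) *ᵥ a < 0 := by
    rw [dotProduct_smul_one_sub_mulVec]
    nlinarith [dotProduct_self_pos_of_pos ha]
  have hQb := hpsd.dotProduct_mulVec_pos_of_neg
    (G.dotProduct_smul_one_sub_adjMatrix_mulVec_eq_zero hne ha₁ hb₂ l)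
    (G.dotProduct_smul_one_sub_adjMatrix_mulVec_eq_zero hne.symm hb₂ ha₁ l)
    (Fintype.sum_pos hb).ne' hQa
  rw [dotProduct_smul_one_sub_mulVec] at hQb
  exact lt_of_mul_lt_mul_right (by linarith) (dotProduct_self_pos_of_pos hb).le

end
end

section
/- Let G be a connected finite graph with maximum degree at most Δ and suppose λ_j(G) ≤ 0 for some j ≥ 1. Then G has at most j²Δ²/2 edges. -/
open Matrix SimpleGraph Finset
open scoped Classical RealInnerProductSpace

noncomputable section

/-!
Since the adjacency matrix has zero trace, the negative eigenvalues sum to minus the sum of the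
positive ones, so the sum of their squares is at most the square of the latter. As `λ_j ≤ 0`, at
most `j - 1` eigenvalues are positive, each at most `Δ` by Gershgorin's theorem. Hence
`2|E| = ∑ λᵢ² ≤ (j - 1)Δ² + ((j - 1)Δ)² ≤ j²Δ²`.
-/

theorem List.countP_lt_le_of_getD_le {α : Type*} [LinearOrder α] {l : List α}
    (hl : l.SortedLE) {a d : α} {j : ℕ} (hj : 1 ≤ j)
    (h : l.getD (l.length - j) d ≤ a) : l.countP (a < ·) ≤ j - 1 := by
  by_cases hjl : j ≤ l.length
  · set k := l.length - j
    have hk : k < l.length := by omega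
    rw [List.getD_eq_getElem _ _ hk] at h
    have hhead : (l.take (k + 1)).countP (a < ·) = 0 := by
      refine List.countP_eq_zero.mpr fun x hx => ?_
      obtain ⟨i, hi, rfl⟩ := List.mem_take_iff_getElem.mp hx
      have hik : i ≤ k := by omega
      simpa using (hl.getElem_le_getElem_of_le hik).trans h
    rw [← List.take_append_drop (k + 1) l, List.countP_append, hhead, zero_add]
    exact List.countP_le_length.trans (by rw [List.length_drop]; omega)
  · exact List.countP_le_length.trans (by omega)

theorem Finset.sum_sq_le_of_sum_eq_zero {ι : Type*} (s : Finset ι) (f : ι → ℝ) {c : ℝ}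
    (hsum : ∑ i ∈ s, f i = 0) (hle : ∀ i ∈ s, f i ≤ c) :
    ∑ i ∈ s, f i ^ 2 ≤ #{i ∈ s | 0 < f i} * c ^ 2 + (#{i ∈ s | 0 < f i} * c) ^ 2 := by
  set P := {i ∈ s | 0 < f i}
  have hPsum_nonneg : 0 ≤ ∑ i ∈ P, f i := sum_nonneg fun i hi => (mem_filter.mp hi).2.le
  have hPsum : ∑ i ∈ P, f i ≤ #P * c := by
    simpa using sum_le_card_nsmul P f c fun i hi => hle i (mem_filter.mp hi).1
  have hPsq : ∑ i ∈ P, f i ^ 2 ≤ #P * c ^ 2 := by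
    refine (sum_le_card_nsmul P _ (c ^ 2) fun i hi => ?_).trans_eq (nsmul_eq_mul _ _)
    obtain ⟨his, hpos⟩ := mem_filter.mp hi
    exact pow_le_pow_left₀ hpos.le (hle i his) 2
  have hNsq : ∑ i ∈ s with ¬0 < f i, f i ^ 2 ≤ (∑ i ∈ P, f i) ^ 2 := by
    have hNsum : ∑ i ∈ s with ¬0 < f i, -f i = ∑ i ∈ P, f i := by
      rw [sum_neg_distrib, neg_eq_iff_add_eq_zero, add_comm, sum_filter_add_sum_filter_not, hsum]
    calc ∑ i ∈ s with ¬0 < f i, f i ^ 2 = ∑ i ∈ s with ¬0 < f i, (-f i) ^ 2 := by simp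
      _ ≤ (∑ i ∈ s with ¬0 < f i, -f i) ^ 2 :=
          sum_sq_le_sq_sum_of_nonneg fun i hi => neg_nonneg.mpr (not_lt.mp (mem_filter.mp hi).2)
      _ = (∑ i ∈ P, f i) ^ 2 := by rw [hNsum]
  rw [← sum_filter_add_sum_filter_not s (0 < f ·)]
  exact add_le_add hPsq (hNsq.trans (pow_le_pow_left₀ hPsum_nonneg hPsum 2))

namespace Matrix.IsHermitian

variable {𝕜 n : Type*} [RCLike 𝕜] [Fintype n] [DecidableEq n] {A : Matrix n n 𝕜}

theorem trace_mul_self_eq_sum_sq_eigenvalues (hA : A.IsHermitian) :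
    (A * A).trace = ∑ i, (hA.eigenvalues i : 𝕜) ^ 2 := by
  set U := hA.eigenvectorUnitary
  set D : Matrix n n 𝕜 := diagonal (RCLike.ofReal ∘ hA.eigenvalues)
  have hAA : A * A = U * (D * D) * star (U : Matrix n n 𝕜) := by
    conv_lhs => rw [hA.spectral_theorem, ← map_mul, Unitary.conjStarAlgAut_apply]
  rw [hAA, trace_mul_cycle, Unitary.coe_star_mul_self, Matrix.one_mul, diagonal_mul_diagonal,
    trace_diagonal]
  simp [sq]

theorem hasEigenvalue_eigenvalues (hA : A.IsHermitian) (i : n) :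
    Module.End.HasEigenvalue (toLin' A) (hA.eigenvalues i : 𝕜) :=
  Module.End.hasEigenvalue_iff_mem_spectrum.mpr <|
    (spectrum_toLin' A).symm ▸ spectrum.algebraMap_mem 𝕜 (hA.eigenvalues_mem_spectrum_real i)

end Matrix.IsHermitian

namespace SimpleGraph

variable {V : Type} [Fintype V] [DecidableEq V] (G : SimpleGraph V)

theorem abs_le_maxDegree_of_hasEigenvalue {μ : ℝ}
    (hμ : Module.End.HasEigenvalue (toLin' (G.adjMatrix ℝ)) μ) : |μ| ≤ G.maxDegree := by
  obtain ⟨k, hk⟩ := eigenvalue_mem_ball hμ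
  rw [Metric.mem_closedBall, Real.dist_eq, adjMatrix_apply, if_neg (G.irrefl (v := k)),
    sub_zero] at hk
  have hentry : ∀ j, ‖G.adjMatrix ℝ k j‖ = G.adjMatrix ℝ k j := fun j => by
    by_cases h : G.Adj k j <;> simp [h]
  calc |μ| ≤ ∑ j ∈ univ.erase k, ‖G.adjMatrix ℝ k j‖ := hk
    _ ≤ ∑ j, ‖G.adjMatrix ℝ k j‖ :=
        sum_le_sum_of_subset_of_nonneg (erase_subset _ _) fun _ _ _ => norm_nonneg _
    _ = G.degree k := by
        have hrow := G.adjMatrix_mulVec_const_apply (a := (1 : ℝ)) (v := k)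
        rw [mulVec, dotProduct, mul_one] at hrow
        simpa only [hentry, Function.const_apply, mul_one] using hrow
    _ ≤ G.maxDegree := mod_cast G.degree_le_maxDegree k

theorem sum_eigenvalues_adjMatrix : ∑ i, (adjHerm G).eigenvalues i = 0 := by
  simpa [trace_adjMatrix] using ((adjHerm G).trace_eq_sum_eigenvalues).symm

theorem sum_sq_eigenvalues_adjMatrix :
    ∑ i, (adjHerm G).eigenvalues i ^ 2 = 2 * #G.edgeFinset := by
  have h := (adjHerm G).trace_mul_self_eq_sum_sq_eigenvalues
  simp only [trace, diag_apply, adjMatrix_mul_self_apply_self, RCLike.ofReal_real_eq_id, id] at h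
  rw [← h, ← Nat.cast_sum, sum_degrees_eq_twice_card_edges]
  push_cast; rfl

theorem card_pos_eigenvalues_le_of_nthEig_nonpos {j : ℕ} (hj : 1 ≤ j) (hneg : nthEig G j ≤ 0) :
    #{i | 0 < (adjHerm G).eigenvalues i} ≤ j - 1 := by
  set l := (univ.val.map (adjHerm G).eigenvalues).sort (· ≤ ·)
  have hlen : l.length = Fintype.card V := by simp [l]
  have hcount : #{i | 0 < (adjHerm G).eigenvalues i} = l.countP (0 < ·) := by
    rw [← Multiset.coe_countP, Multiset.sort_eq, Multiset.countP_map]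
    rfl
  rw [hcount]
  refine List.countP_lt_le_of_getD_le (Multiset.pairwise_sort _ _).sortedLE (d := 0) hj ?_
  rwa [hlen]

end SimpleGraph

theorem stmt14_general {V : Type} [Fintype V] [DecidableEq V] (G : SimpleGraph V)
    (Δ j : ℕ) (hΔ : G.maxDegree ≤ Δ)
    (hj : 1 ≤ j) (hneg : nthEig G j ≤ 0) :
    (G.edgeFinset.card : ℝ) ≤ (j : ℝ) ^ 2 * (Δ : ℝ) ^ 2 / 2 := by
  set p := #{i | 0 < (adjHerm G).eigenvalues i}
  have hp : (p : ℝ) ≤ j - 1 := by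
    rw [← Nat.cast_one, ← Nat.cast_sub hj]
    exact_mod_cast G.card_pos_eigenvalues_le_of_nthEig_nonpos hj hneg
  have heig_le (i : V) (_ : i ∈ univ) : (adjHerm G).eigenvalues i ≤ Δ :=
    (le_abs_self _).trans <| (G.abs_le_maxDegree_of_hasEigenvalue
      ((adjHerm G).hasEigenvalue_eigenvalues i)).trans (mod_cast hΔ)
  calc (#G.edgeFinset : ℝ) = (∑ i, (adjHerm G).eigenvalues i ^ 2) / 2 := by
        rw [G.sum_sq_eigenvalues_adjMatrix]; ring
    _ ≤ (p * Δ ^ 2 + (p * Δ) ^ 2) / 2 := by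
        gcongr
        exact univ.sum_sq_le_of_sum_eq_zero _ G.sum_eigenvalues_adjMatrix heig_le
    _ ≤ ((j - 1) * Δ ^ 2 + ((j - 1) * Δ) ^ 2) / 2 := by gcongr
    _ ≤ j ^ 2 * Δ ^ 2 / 2 := by nlinarith [sq_nonneg (Δ : ℝ)]

/-- A connected graph with maximum degree at most `Δ` and `λ_j(G) ≤ 0` for some `j ≥ 1`
has at most `j²Δ²/2` edges. -/
theorem stmt14 {V : Type} [Fintype V] [DecidableEq V] (G : SimpleGraph V)
    (hG : G.Connected) (Δ j : ℕ) (hΔ : G.maxDegree ≤ Δ)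
    (hj : 1 ≤ j) (hjn : j ≤ Fintype.card V) (hneg : nthEig G j ≤ 0) :
    (G.edgeFinset.card : ℝ) ≤ (j : ℝ) ^ 2 * (Δ : ℝ) ^ 2 / 2 :=
  stmt14_general G Δ j hΔ hj hneg

end
end

section
/- Let α ∈ (0,1), λ = (1−α)/(2α), and let G be the associated graph of unit vectors with pairwise inner products ±α (edges corresponding to inner product −α). Let X be an independent set in G and ∅ ≠ Y ⊊ X with |Y| = a, |X∖Y| = b, and ab > λ². Then the number of vertices outside X adjacent to every vertex of Y and to no vertex of X∖Y is at most λ²(a + b + 2λ)/(ab − λ²). -/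
open Finset
open scoped Classical RealInnerProductSpace

/-!
Let `C` be the set of vertices being counted, `m = |C|`, and `Z = X ∖ Y`. For reals `y, z` the
vector `u = ∑_C v + y ∑_Y v + z ∑_Z v` has, by the sign pattern of the inner products,
`0 ≤ ‖u‖² ≤ α (m + a y + b z)² + (1 - α) (m + a y² + b z²) - 4 α m a y`; this is the
positive semidefiniteness of `λI - A_G + J/2` tested on a vector constant on `C`, `Y` and `Z`.
Minimising the right-hand side over `y, z` gives `m (ab - λ²) ≤ λ² (a + b + 2λ)`.
-/

section BlockSums

variable {ι E : Type*} [NormedAddCommGroup E] [InnerProductSpace ℝ E] {v : ι → E}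

lemma inner_sum_sum_of_forall_inner_eq {s t : Finset ι} {c : ℝ}
    (h : ∀ i ∈ s, ∀ j ∈ t, ⟪v i, v j⟫ = c) :
    ⟪∑ i ∈ s, v i, ∑ j ∈ t, v j⟫ = #s * #t * c := by
  simp_rw [sum_inner, inner_sum]
  rw [sum_congr rfl fun i hi => sum_congr rfl (h i hi)]
  simp only [sum_const, nsmul_eq_mul]
  ring

lemma norm_sum_sq_le_of_inner_le {s : Finset ι} {α : ℝ} (hunit : ∀ i, ‖v i‖ = 1)
    (hle : ∀ i j, i ≠ j → ⟪v i, v j⟫ ≤ α) :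
    ‖∑ i ∈ s, v i‖ ^ 2 ≤ α * #s ^ 2 + (1 - α) * #s := by
  have hterm : ∀ i j, ⟪v i, v j⟫ ≤ α + if i = j then 1 - α else 0 := by
    intro i j
    by_cases hij : i = j
    · subst hij
      simp [hunit]
    · simpa [hij] using hle i j hij
  calc ‖∑ i ∈ s, v i‖ ^ 2 = ∑ i ∈ s, ∑ j ∈ s, ⟪v i, v j⟫ := by
        rw [← real_inner_self_eq_norm_sq, sum_inner]
        simp_rw [inner_sum]
    _ ≤ ∑ i ∈ s, ∑ j ∈ s, (α + if i = j then 1 - α else 0) :=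
        sum_le_sum fun i _ => sum_le_sum fun j _ => hterm i j
    _ = α * #s ^ 2 + (1 - α) * #s := by
        simp only [sum_add_distrib, sum_const, sum_ite_eq, sum_ite_mem, inter_self, nsmul_eq_mul]
        ring

lemma norm_blockSum_sq_le {α : ℝ} (hunit : ∀ i, ‖v i‖ = 1)
    (hle : ∀ i j, i ≠ j → ⟪v i, v j⟫ ≤ α) {C Y Z : Finset ι}
    (hCY : ∀ i ∈ C, ∀ j ∈ Y, ⟪v i, v j⟫ = -α) (hCZ : ∀ i ∈ C, ∀ j ∈ Z, ⟪v i, v j⟫ = α)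
    (hYZ : ∀ i ∈ Y, ∀ j ∈ Z, ⟪v i, v j⟫ = α) (y z : ℝ) :
    ‖∑ i ∈ C, v i + y • ∑ i ∈ Y, v i + z • ∑ i ∈ Z, v i‖ ^ 2 ≤
      α * (#C + #Y * y + #Z * z) ^ 2 + (1 - α) * (#C + #Y * y ^ 2 + #Z * z ^ 2)
        - 4 * α * #C * #Y * y := by
  have hC := norm_sum_sq_le_of_inner_le (s := C) hunit hle
  have hY := mul_le_mul_of_nonneg_left (norm_sum_sq_le_of_inner_le (s := Y) hunit hle)
    (sq_nonneg y)
  have hZ := mul_le_mul_of_nonneg_left (norm_sum_sq_le_of_inner_le (s := Z) hunit hle)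
    (sq_nonneg z)
  rw [norm_add_sq_real, norm_add_sq_real, norm_smul, norm_smul, inner_add_left,
    real_inner_smul_right, real_inner_smul_right, real_inner_smul_left,
    real_inner_smul_right, inner_sum_sum_of_forall_inner_eq hCY,
    inner_sum_sum_of_forall_inner_eq hCZ, inner_sum_sum_of_forall_inner_eq hYZ,
    mul_pow, mul_pow, Real.norm_eq_abs, Real.norm_eq_abs, sq_abs, sq_abs]
  nlinarith

end BlockSums

lemma mul_sub_sq_le_of_forall_quadratic_nonneg {l m a b : ℝ} (hl : 0 < l) (hm : 0 ≤ m)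
    (ha : 0 ≤ a) (hb : 0 ≤ b)
    (h : ∀ y z : ℝ, 0 ≤ (m + a * y + b * z) ^ 2 + 2 * l * (m + a * y ^ 2 + b * z ^ 2)
      - 4 * m * a * y) :
    m * (a * b - l ^ 2) ≤ l ^ 2 * (a + b + 2 * l) := by
  set D := l * (a + b + 2 * l)
  have hD : 0 < D := by positivity
  -- the minimiser of the quadratic form
  set y₀ := m * (b + l) / D
  set z₀ := -(m * (a + l)) / D
  have hmin := mul_nonneg (h y₀ z₀) hD.le
  have hvalue : ((m + a * y₀ + b * z₀) ^ 2 + 2 * l * (m + a * y₀ ^ 2 + b * z₀ ^ 2)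
      - 4 * m * a * y₀) * D = 2 * m * (l ^ 2 * (a + b + 2 * l) - m * (a * b - l ^ 2)) := by
    simp only [y₀, z₀]
    field_simp
    ring
  rw [hvalue] at hmin
  rcases hm.eq_or_lt with rfl | hm
  · simp only [zero_mul]; positivity
  · linarith [nonneg_of_mul_nonneg_right hmin (by positivity)]

theorem stmt18_general (α : ℝ) (hα : 0 < α) (hα1 : α < 1) (l : ℝ) (hl : l = (1 - α) / (2 * α))
    (d N : ℕ) (v : Fin N → EuclideanSpace ℝ (Fin d)) (hunit : ∀ i, ‖v i‖ = 1)
    (hpm : ∀ i j, i ≠ j → ⟪v i, v j⟫ = α ∨ ⟪v i, v j⟫ = -α)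
    (X Y : Finset (Fin N)) (hYX : Y ⊆ X)
    (hindep : ∀ i ∈ X, ∀ j ∈ X, i ≠ j → ⟪v i, v j⟫ = α)
    (a b : ℕ) (ha : a = Y.card) (hb : b = (X \ Y).card) (hab : l ^ 2 < (a : ℝ) * b) :
    ((Finset.univ.filter (fun i => i ∉ X ∧ (∀ j ∈ Y, ⟪v i, v j⟫ = -α) ∧
        (∀ j ∈ X \ Y, ⟪v i, v j⟫ = α))).card : ℝ) ≤
      l ^ 2 * ((a : ℝ) + b + 2 * l) / ((a : ℝ) * b - l ^ 2) := by
  set C := Finset.univ.filter (fun i => i ∉ X ∧ (∀ j ∈ Y, ⟪v i, v j⟫ = -α) ∧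
    (∀ j ∈ X \ Y, ⟪v i, v j⟫ = α))
  have hl0 : 0 < l := by rw [hl]; exact div_pos (by linarith) (by linarith)
  have hle : ∀ i j, i ≠ j → ⟪v i, v j⟫ ≤ α := fun i j hij => by
    rcases hpm i j hij with h | h <;> linarith
  have hYZ : ∀ i ∈ Y, ∀ j ∈ X \ Y, ⟪v i, v j⟫ = α := fun i hi j hj =>
    hindep i (hYX hi) j (mem_sdiff.mp hj).1 fun hij => (mem_sdiff.mp hj).2 (hij ▸ hi)
  have hquad : ∀ y z : ℝ, 0 ≤ (#C + a * y + b * z) ^ 2 + 2 * l * (#C + a * y ^ 2 + b * z ^ 2)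
      - 4 * #C * a * y := fun y z => by
    have hnorm := (sq_nonneg _).trans (norm_blockSum_sq_le (C := C) hunit hle
      (fun i hi => (mem_filter.mp hi).2.2.1) (fun i hi => (mem_filter.mp hi).2.2.2) hYZ y z)
    have h1α : 1 - α = α * (2 * l) := by rw [hl]; field_simp
    rw [h1α, ← ha, ← hb] at hnorm
    exact nonneg_of_mul_nonneg_right (by linarith) hα
  rw [le_div_iff₀ (by linarith)]
  exact mul_sub_sq_le_of_forall_quadratic_nonneg hl0 (by positivity) (by positivity)
    (by positivity) hquad

/-- Let `λ = (1-α)/(2α)` and let unit vectors `v i` have pairwise inner products `±α`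
(the associated graph joins `i ~ j` when `⟪v i, v j⟫ = -α`). If `X` is an independent set,
`∅ ≠ Y ⊊ X`, `|Y| = a`, `|X∖Y| = b` and `ab > λ²`, then the number of vertices outside `X`
adjacent to every vertex of `Y` and to no vertex of `X∖Y` is at most
`λ²(a + b + 2λ)/(ab - λ²)`. -/
theorem stmt18 (α : ℝ) (hα : 0 < α) (hα1 : α < 1) (l : ℝ) (hl : l = (1 - α) / (2 * α))
    (d N : ℕ) (v : Fin N → EuclideanSpace ℝ (Fin d)) (hunit : ∀ i, ‖v i‖ = 1)
    (hpm : ∀ i j, i ≠ j → ⟪v i, v j⟫ = α ∨ ⟪v i, v j⟫ = -α)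
    (X Y : Finset (Fin N)) (hYX : Y ⊆ X) (hY : Y.Nonempty) (hYne : Y ≠ X)
    (hindep : ∀ i ∈ X, ∀ j ∈ X, i ≠ j → ⟪v i, v j⟫ = α)
    (a b : ℕ) (ha : a = Y.card) (hb : b = (X \ Y).card) (hab : l ^ 2 < (a : ℝ) * b) :
    ((Finset.univ.filter (fun i => i ∉ X ∧ (∀ j ∈ Y, ⟪v i, v j⟫ = -α) ∧
        (∀ j ∈ X \ Y, ⟪v i, v j⟫ = α))).card : ℝ) ≤
      l ^ 2 * ((a : ℝ) + b + 2 * l) / ((a : ℝ) * b - l ^ 2) :=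
  stmt18_general α hα hα1 l hl d N v hunit hpm X Y hYX hindep a b ha hb hab
end

section
/- Let α ∈ (0,1), λ = (1−α)/(2α), and let G be the associated graph of a set of unit vectors with pairwise inner products ±α. There is M₁ = M₁(α) such that if X is an independent set of G with |X| ≥ M₁, then the subgraph of G induced by the common non-neighbors of X has maximum degree at most ⌈λ²⌉. -/
open Finset
open scoped Classical RealInnerProductSpace

private lemma stmt19_arith (α l D n : ℝ) (hα : 0 < α) (hrel : 2*α*l = 1 - α) (hl0 : 0 < l)
    (hD : l^2 + 1 ≤ D) (hn : D*(1+l)^2 + 1 ≤ n) :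
    (D*n)^2 + (l*n)^2*(D + α*D*(D-1)) + (-(D*(1+l)))^2*(n + α*n*(n-1))
      + 2*(D*n)*(l*n)*(-α*D) + 2*(D*n)*(-(D*(1+l)))*(α*n)
      + 2*(l*n)*(-(D*(1+l)))*(α*D*n) < 0 := by
  have hD1 : (1:ℝ) ≤ D := by nlinarith [sq_nonneg l]
  have hn1 : (1:ℝ) ≤ n := by nlinarith [sq_nonneg (1+l)]
  have hE : (D*n)^2 + (l*n)^2*(D + α*D*(D-1)) + (-(D*(1+l)))^2*(n + α*n*(n-1))
      + 2*(D*n)*(l*n)*(-α*D) + 2*(D*n)*(-(D*(1+l)))*(α*n)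
      + 2*(l*n)*(-(D*(1+l)))*(α*D*n)
      = 2*α*l*n*D*(n*(l^2 - D) + D*(1+l)^2) := by
    linear_combination (-n*(D^2*n + l^2*n*D + D^2*(1+l)^2)) * hrel
  rw [hE]
  have hbr : n*(l^2 - D) + D*(1+l)^2 < 0 := by nlinarith
  have hpos : 0 < 2*α*l*n*D := by positivity
  nlinarith


/-- Let `λ = (1-α)/(2α)`. There is `M₁ = M₁(α)` such that for any unit vectors with pairwise
inner products `±α` (associated graph: `i ~ j` iff `⟪v i, v j⟫ = -α`) and any independent
set `X` with `|X| ≥ M₁`, the subgraph induced by the common non-neighbors of `X` has maximum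
degree at most `⌈λ²⌉`. -/
theorem stmt19 (α : ℝ) (hα : 0 < α) (hα1 : α < 1) (l : ℝ)
    (hl : l = (1 - α) / (2 * α)) :
    ∃ M₁ : ℕ, ∀ (d N : ℕ) (v : Fin N → EuclideanSpace ℝ (Fin d)),
      (∀ i, ‖v i‖ = 1) →
      (∀ i j, i ≠ j → ⟪v i, v j⟫ = α ∨ ⟪v i, v j⟫ = -α) →
      ∀ X : Finset (Fin N),
        (∀ i ∈ X, ∀ j ∈ X, i ≠ j → ⟪v i, v j⟫ = α) →
        M₁ ≤ X.card →
        ∀ i, i ∉ X → (∀ j ∈ X, ⟪v i, v j⟫ = α) →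
          (Finset.univ.filter (fun p => p ∉ X ∧ (∀ j ∈ X, ⟪v p, v j⟫ = α) ∧
              ⟪v i, v p⟫ = -α)).card ≤ ⌈l ^ 2⌉₊ := by
  have hl0 : 0 < l := by
    rw [hl]; apply div_pos <;> linarith
  have hrel : 2 * α * l = 1 - α := by
    rw [hl]; field_simp
  set Dn : ℕ := ⌈l ^ 2⌉₊ + 1 with hDndef
  refine ⟨⌈(Dn : ℝ) * (1 + l) ^ 2⌉₊ + 1, ?_⟩
  intro d N v hnorm hpm X hX hcard i hiX hiA
  by_contra hcon
  push_neg at hcon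
  obtain ⟨P, hPsub, hPcard⟩ := Finset.exists_subset_card_eq (show Dn ≤ _ from hcon)
  have hP : ∀ p ∈ P, p ∉ X ∧ (∀ j ∈ X, ⟪v p, v j⟫ = α) ∧ ⟪v i, v p⟫ = -α := by
    intro p hp
    have := hPsub hp
    simpa using (Finset.mem_filter.mp this).2
  set n := X.card with hn
  have hn1 : 1 ≤ n := le_trans (Nat.le_add_left 1 _) hcard
  set D : ℝ := (Dn : ℝ) with hD
  have hD1 : 1 ≤ Dn := Nat.le_add_left 1 _
  have hDge : l ^ 2 + 1 ≤ D := by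
    have h1 := Nat.le_ceil (l ^ 2)
    rw [hD, hDndef]; push_cast; linarith
  have hnge : D * (1 + l) ^ 2 + 1 ≤ (n : ℝ) := by
    have h1 := Nat.le_ceil (D * (1 + l) ^ 2)
    have h2 : ((⌈D * (1 + l) ^ 2⌉₊ : ℝ)) + 1 ≤ (n : ℝ) := by exact_mod_cast hcard
    linarith
  set a : ℝ := D * n with ha
  set b : ℝ := l * n with hb
  set c : ℝ := -(D * (1 + l)) with hc
  set u := v i with hu
  set s := ∑ p ∈ P, v p with hs
  set x := ∑ j ∈ X, v j with hx
  set w := a • u + b • s + c • x with hw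
  have h0 : (0:ℝ) ≤ ⟪w, w⟫ := real_inner_self_nonneg
  have hUU : ⟪u, u⟫ = 1 := by
    rw [hu, real_inner_self_eq_norm_mul_norm, hnorm]; norm_num
  have hUS : ⟪u, s⟫ = -α * D := by
    rw [hu, hs, inner_sum]
    calc ∑ p ∈ P, ⟪v i, v p⟫ = ∑ _p ∈ P, (-α) :=
          Finset.sum_congr rfl (fun p hp => (hP p hp).2.2)
      _ = -α * D := by rw [Finset.sum_const, hPcard, nsmul_eq_mul, hD]; ring
  have hUX : ⟪u, x⟫ = α * n := by
    rw [hu, hx, inner_sum]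
    calc ∑ j ∈ X, ⟪v i, v j⟫ = ∑ _j ∈ X, α :=
          Finset.sum_congr rfl (fun j hj => hiA j hj)
      _ = α * n := by rw [Finset.sum_const, ← hn, nsmul_eq_mul]; ring
  have hSX : ⟪s, x⟫ = α * D * n := by
    rw [hs, hx, sum_inner]
    calc ∑ p ∈ P, ⟪v p, ∑ j ∈ X, v j⟫ = ∑ _p ∈ P, (α * n) := by
          refine Finset.sum_congr rfl fun p hp => ?_
          rw [inner_sum]
          calc ∑ j ∈ X, ⟪v p, v j⟫ = ∑ _j ∈ X, α :=
                Finset.sum_congr rfl (fun j hj => (hP p hp).2.1 j hj)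
            _ = α * n := by rw [Finset.sum_const, ← hn, nsmul_eq_mul]; ring
      _ = α * D * n := by rw [Finset.sum_const, hPcard, nsmul_eq_mul, hD]; ring
  have hXX : ⟪x, x⟫ = (n : ℝ) + α * n * ((n : ℝ) - 1) := by
    rw [hx, sum_inner]
    have hterm : ∀ j ∈ X, ⟪v j, ∑ k ∈ X, v k⟫ = 1 + α * ((n : ℝ) - 1) := by
      intro j hj
      rw [inner_sum, ← Finset.add_sum_erase _ _ hj]
      have h1 : ⟪v j, v j⟫ = 1 := by
        rw [real_inner_self_eq_norm_mul_norm, hnorm]; norm_num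
      have h2 : ∑ k ∈ X.erase j, ⟪v j, v k⟫ = α * ((n : ℝ) - 1) := by
        calc ∑ k ∈ X.erase j, ⟪v j, v k⟫ = ∑ _k ∈ X.erase j, α :=
              Finset.sum_congr rfl (fun k hk => hX j hj k (Finset.mem_of_mem_erase hk)
                (Ne.symm (Finset.ne_of_mem_erase hk)))
          _ = α * ((n : ℝ) - 1) := by
              rw [Finset.sum_const, Finset.card_erase_of_mem hj, ← hn, nsmul_eq_mul,
                Nat.cast_sub hn1]
              push_cast; ring
      rw [h1, h2]
    rw [Finset.sum_congr rfl hterm, Finset.sum_const, ← hn, nsmul_eq_mul]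
    ring
  have hSS : ⟪s, s⟫ ≤ D + α * D * (D - 1) := by
    have key : ∀ p ∈ P, ⟪v p, s⟫ ≤ 1 + α * (D - 1) := by
      intro p hp
      rw [hs, inner_sum, ← Finset.add_sum_erase _ _ hp]
      have h1 : ⟪v p, v p⟫ = 1 := by
        rw [real_inner_self_eq_norm_mul_norm, hnorm]; norm_num
      have h2 : ∑ q ∈ P.erase p, ⟪v p, v q⟫ ≤ α * (D - 1) := by
        calc ∑ q ∈ P.erase p, ⟪v p, v q⟫ ≤ ∑ _q ∈ P.erase p, α := by
              apply Finset.sum_le_sum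
              intro q hq
              rcases hpm p q (Ne.symm (Finset.ne_of_mem_erase hq)) with h | h
              · rw [h]
              · rw [h]; linarith
          _ = α * (D - 1) := by
              rw [Finset.sum_const, Finset.card_erase_of_mem hp, hPcard, nsmul_eq_mul,
                Nat.cast_sub hD1, hD]
              push_cast; ring
      linarith
    calc ⟪s, s⟫ = ∑ p ∈ P, ⟪v p, s⟫ := by rw [hs, sum_inner]
      _ ≤ ∑ _p ∈ P, (1 + α * (D - 1)) := Finset.sum_le_sum key
      _ = D + α * D * (D - 1) := by
          rw [Finset.sum_const, hPcard, nsmul_eq_mul, hD]; ring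
  have hWexp : ⟪w, w⟫ = a ^ 2 * ⟪u, u⟫ + b ^ 2 * ⟪s, s⟫ + c ^ 2 * ⟪x, x⟫
      + 2 * a * b * ⟪u, s⟫ + 2 * a * c * ⟪u, x⟫ + 2 * b * c * ⟪s, x⟫ := by
    rw [hw]
    simp only [inner_add_left, inner_add_right, real_inner_smul_left, real_inner_smul_right]
    rw [real_inner_comm s u, real_inner_comm x u, real_inner_comm x s]
    ring
  have hbsq : (0:ℝ) ≤ b ^ 2 := sq_nonneg b
  have hWle : ⟪w, w⟫ ≤ a ^ 2 + b ^ 2 * (D + α * D * (D - 1))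
      + c ^ 2 * ((n : ℝ) + α * n * ((n : ℝ) - 1))
      + 2 * a * b * (-α * D) + 2 * a * c * (α * n) + 2 * b * c * (α * D * n) := by
    rw [hWexp, hUU, hUX, hUS, hSX, hXX]
    have := mul_le_mul_of_nonneg_left hSS hbsq
    linarith
  have hfin := stmt19_arith α l D (n : ℝ) hα hrel hl0 hDge hnge
  rw [ha, hb, hc] at hWle
  linarith [h0, hWle, hfin]
end
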